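/- arXiv:1903.11566 — 2 statements merged into one kernel-verified Lean document; each statement's English description precedes it below -/
import Mathlib

section
/- Let R be a commutative unital ring, a, a' ∈ R, and p ≥ 1. Let D(K_p; a, a') be the p×p matrix with (i,j) entry equal to a if i < j, 0 if i = j, and a' if i > j. Then cof(D(K_p; a, a')) = (−1)^{p−1}·Σ_{k=0}^{p−1} a^k (a')^{p−1−k}; equivalently, (a − a')·cof(D(K_p; a, a')) = (−1)^{p−1}·(a^p − (a')^p). -/
/-- The cofactor-sum of a square matrix: the sum over all `i, j` of
`(-1)^(i+j)` times the determinant of the submatrix obtained by deleting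
row `i` and column `j`. (For the empty matrix we set it to `0`.) -/
def cofSum {R : Type*} [CommRing R] : ∀ {n : ℕ}, Matrix (Fin n) (Fin n) R → R
  | 0, _ => 0
  | m + 1, A => ∑ i : Fin (m + 1), ∑ j : Fin (m + 1),
      (-1 : R) ^ ((i : ℕ) + (j : ℕ)) * (A.submatrix i.succAbove j.succAbove).det

/-- The distance matrix `D(K_p; a, a')` of the bi-directed complete graph `K_p`:
the `p × p` Toeplitz matrix with `(i,j)` entry `a` if `i < j`, `0` if `i = j`,
and `a'` if `i > j`. -/
def DK {R : Type*} [CommRing R] (p : ℕ) (a a' : R) : Matrix (Fin p) (Fin p) R :=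
  Matrix.of fun i j => if i < j then a else if j < i then a' else 0


open Matrix Finset

lemma cofSum_map {R S : Type*} [CommRing R] [CommRing S] (f : R →+* S) :
    ∀ {n : ℕ} (A : Matrix (Fin n) (Fin n) R), cofSum (A.map f) = f (cofSum A)
  | 0, A => by simp [cofSum]
  | m+1, A => by
      simp only [cofSum, map_sum, _root_.map_mul, map_pow, map_neg, _root_.map_one,
        Matrix.submatrix_map]
      exact Finset.sum_congr rfl fun i _ => Finset.sum_congr rfl fun j _ => by
        rw [RingHom.map_det]; rfl

lemma DK_map {R S : Type*} [CommRing R] [CommRing S] (f : R →+* S) (p : ℕ) (a b : R) :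
    (DK p a b).map f = DK p (f a) (f b) := by
  ext i j
  simp [DK, Matrix.map_apply, apply_ite f]

lemma cofSum_eq_sum_adjugate {R : Type*} [CommRing R] {m : ℕ}
    (A : Matrix (Fin (m + 1)) (Fin (m + 1)) R) :
    cofSum A = ∑ i : Fin (m + 1), ∑ j : Fin (m + 1), A.adjugate i j := by
  refine Eq.trans ?_ (Finset.sum_comm (f := fun (j i : Fin (m + 1)) => A.adjugate i j))
  beta_reduce
  show (∑ j : Fin (m + 1), ∑ i : Fin (m + 1),
      (-1 : R) ^ ((j : ℕ) + (i : ℕ)) * (A.submatrix j.succAbove i.succAbove).det) = _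
  refine Finset.sum_congr rfl fun j _ => Finset.sum_congr rfl fun i _ => ?_
  rw [Matrix.adjugate_fin_succ_eq_det_submatrix, add_comm]

lemma det_add_smul_ones {K : Type*} [Field K] {m : ℕ} (A : Matrix (Fin m) (Fin m) K)
    (hA : A.det ≠ 0) (t : K) :
    (A + t • Matrix.of (fun _ _ => (1:K))).det
      = A.det + t * ∑ i : Fin m, ∑ j : Fin m, A.adjugate i j := by
  have h1 : t • (Matrix.of (fun _ _ => (1:K)) : Matrix (Fin m) (Fin m) K)
      = Matrix.replicateCol (Fin 1) (fun _ : Fin m => t) * Matrix.replicateRow (Fin 1) (fun _ : Fin m => (1:K)) := by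
    ext i j
    simp [Matrix.mul_apply, Matrix.replicateCol, Matrix.replicateRow]
  have key : ∀ (i1 : DecidableEq (Fin 1)) (i2 : Fintype (Fin 1))
      (B : Matrix (Fin 1) (Fin 1) K), @Matrix.det (Fin 1) i1 i2 K _ B = B 0 0 := by
    intro i1 i2 B
    have h2 : i2 = Fin.fintype 1 := Subsingleton.elim _ _
    subst h2
    have h3 : i1 = instDecidableEqFin 1 := Subsingleton.elim _ _
    subst h3
    exact Matrix.det_fin_one B
  rw [h1]
  refine (Matrix.det_add_replicateCol_mul_replicateRow (ι := Fin 1) hA.isUnit _ _).trans ?_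
  rw [key]
  simp only [Matrix.add_apply, Matrix.one_apply_eq, Matrix.mul_apply, Matrix.replicateRow_apply,
    Matrix.replicateCol_apply, Matrix.inv_def, Ring.inverse_eq_inv', Matrix.smul_apply, smul_eq_mul,
    one_mul, Finset.univ_unique]
  rw [mul_add, mul_one]
  congr 1
  simp only [Finset.mul_sum, Finset.sum_mul]
  conv_rhs => rw [Finset.sum_comm]
  refine Finset.sum_congr rfl fun j _ => Finset.sum_congr rfl fun i _ => ?_
  field_simp

lemma det_DK_lower {R : Type*} [CommRing R] (p : ℕ) (a b : R) :
    (DK p a b + (-a) • Matrix.of (fun _ _ => (1:R))).det = (-a) ^ p := by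
  rw [Matrix.det_of_lowerTriangular _ ?ht]
  · simp [DK, Matrix.add_apply, Matrix.smul_apply, Finset.prod_const, Finset.card_univ]
  case ht =>
    intro i j hij
    have hij' : i < j := hij
    simp [DK, Matrix.add_apply, Matrix.smul_apply, hij']

lemma det_DK_upper {R : Type*} [CommRing R] (p : ℕ) (a b : R) :
    (DK p a b + (-b) • Matrix.of (fun _ _ => (1:R))).det = (-b) ^ p := by
  rw [Matrix.det_of_upperTriangular ?ht]
  · simp [DK, Matrix.add_apply, Matrix.smul_apply, Finset.prod_const, Finset.card_univ]
  case ht =>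
    intro i j hij
    have hij' : (j : Fin p) < i := hij
    simp [DK, Matrix.add_apply, Matrix.smul_apply, hij', lt_asymm hij']

lemma field_cof {K : Type*} [Field K] (m : ℕ) (a b : K)
    (ha : a ≠ 0) (hb : b ≠ 0) (hab : a ≠ b) (hpow : a ^ (m + 1) ≠ b ^ (m + 1)) :
    cofSum (DK (m + 2) a b)
      = (-1 : K) ^ (m + 1) * ∑ k ∈ Finset.range (m + 2), a ^ k * b ^ (m + 1 - k) := by
  set J : Matrix (Fin (m + 2)) (Fin (m + 2)) K := Matrix.of (fun _ _ => (1:K)) with hJ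
  set A₀ : Matrix (Fin (m + 2)) (Fin (m + 2)) K := DK (m + 2) a b + (-a) • J with hA₀
  have hA₀det : A₀.det = (-a) ^ (m + 2) := det_DK_lower (m + 2) a b
  have hA₀ne : A₀.det ≠ 0 := by
    rw [hA₀det]
    exact pow_ne_zero _ (neg_ne_zero.mpr ha)
  set c : K := ∑ i : Fin (m + 2), ∑ j : Fin (m + 2), A₀.adjugate i j with hc
  have hDK : A₀ + a • J = DK (m + 2) a b := by
    rw [hA₀, add_assoc, ← add_smul, neg_add_cancel, zero_smul, add_zero]
  have hAb : A₀ + (a - b) • J = DK (m + 2) a b + (-b) • J := by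
    rw [hA₀, add_assoc, ← add_smul]
    have : -a + (a - b) = -b := by ring
    rw [this]
  have e1 : (-b) ^ (m + 2) = (-a) ^ (m + 2) + (a - b) * c := by
    rw [← det_DK_upper (m + 2) a b, ← hAb, det_add_smul_ones A₀ hA₀ne, hA₀det]
  have edet : (DK (m + 2) a b).det = (-a) ^ (m + 2) + a * c := by
    rw [← hDK, det_add_smul_ones A₀ hA₀ne, hA₀det]
  have hne : (DK (m + 2) a b).det ≠ 0 := by
    intro h0
    have key : (-1 : K) ^ (m + 2) * (a * b) * (b ^ (m + 1) - a ^ (m + 1))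
        = (a - b) * (DK (m + 2) a b).det := by
      linear_combination a * e1 + (b - a) * edet
    rw [h0, mul_zero] at key
    rcases mul_eq_zero.mp key with h | h
    · rcases mul_eq_zero.mp h with h' | h'
      · exact pow_ne_zero _ (neg_ne_zero.mpr one_ne_zero) h'
      · exact mul_ne_zero ha hb h'
    · exact hpow (sub_eq_zero.mp h).symm
  set S : K := ∑ i : Fin (m + 2), ∑ j : Fin (m + 2), (DK (m + 2) a b).adjugate i j with hS
  have e2 : (-a) ^ (m + 2) = (DK (m + 2) a b).det + (-a) * S := by
    rw [← det_DK_lower (m + 2) a b, det_add_smul_ones _ hne]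
  have e3 : (-b) ^ (m + 2) = (DK (m + 2) a b).det + (-b) * S := by
    rw [← det_DK_upper (m + 2) a b, det_add_smul_ones _ hne]
  have hg : (∑ k ∈ Finset.range (m + 2), a ^ k * b ^ (m + 1 - k)) * (a - b)
      = a ^ (m + 2) - b ^ (m + 2) := geom_sum₂_mul a b (m + 2)
  have hba : b - a ≠ 0 := sub_ne_zero.mpr (Ne.symm hab)
  have main : (b - a) * S
      = (b - a) * ((-1 : K) ^ (m + 1) * ∑ k ∈ Finset.range (m + 2), a ^ k * b ^ (m + 1 - k)) := by
    linear_combination e3 - e2 + (-1 : K) ^ (m + 1) * hg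
  rw [cofSum_eq_sum_adjugate, ← hS]
  exact mul_left_cancel₀ hba main

lemma poly_cof (m : ℕ) :
    cofSum (DK (m + 2) (MvPolynomial.X 0 : MvPolynomial (Fin 2) ℤ) (MvPolynomial.X 1))
      = (-1 : MvPolynomial (Fin 2) ℤ) ^ (m + 1)
          * ∑ k ∈ Finset.range (m + 2),
              (MvPolynomial.X 0 : MvPolynomial (Fin 2) ℤ) ^ k
                * (MvPolynomial.X 1 : MvPolynomial (Fin 2) ℤ) ^ (m + 1 - k) := by
  set S := MvPolynomial (Fin 2) ℤ
  set K := FractionRing S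
  set φ : S →+* K := algebraMap S K with hφ
  have hinj : Function.Injective φ := IsFractionRing.injective S K
  have hX : (MvPolynomial.X 0 : S) ≠ MvPolynomial.X 1 :=
    MvPolynomial.X_injective.ne (by decide : (0 : Fin 2) ≠ 1)
  have hXpow : (MvPolynomial.X 0 : S) ^ (m + 1) ≠ (MvPolynomial.X 1 : S) ^ (m + 1) := by
    intro h
    have h2 := congrArg (MvPolynomial.coeff (Finsupp.single 0 (m + 1))) h
    rw [MvPolynomial.coeff_X_pow, MvPolynomial.coeff_X_pow, if_pos rfl,
      if_neg (fun heq => by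
        have h3 := DFunLike.congr_fun heq (1 : Fin 2)
        simp [Finsupp.single_apply] at h3)] at h2
    exact one_ne_zero h2
  apply hinj
  rw [← cofSum_map φ, DK_map φ]
  rw [field_cof m (φ (MvPolynomial.X 0)) (φ (MvPolynomial.X 1))
    (fun h => MvPolynomial.X_ne_zero 0 (hinj (by simpa using h)))
    (fun h => MvPolynomial.X_ne_zero 1 (hinj (by simpa using h)))
    (fun h => hX (hinj h))
    (fun h => hXpow (hinj (by simpa using h)))]
  simp [map_pow, _root_.map_mul, Finset.mul_sum]
  rw [Finset.mul_sum]

/-- For `p ≥ 1`, the cofactor-sum of `D(K_p; a, a')` is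
`(−1)^(p−1) · Σ_{k=0}^{p−1} a^k (a')^(p−1−k)`; equivalently,
`(a − a') · cof(D(K_p; a, a')) = (−1)^(p−1) · (a^p − (a')^p)`. -/
theorem stmt_9 {R : Type*} [CommRing R] (a a' : R) {p : ℕ} (hp : 1 ≤ p) :
    cofSum (DK p a a')
        = (-1 : R) ^ (p - 1) * ∑ k ∈ Finset.range p, a ^ k * a' ^ (p - 1 - k)
    ∧ (a - a') * cofSum (DK p a a')
        = (-1 : R) ^ (p - 1) * (a ^ p - a' ^ p) := by
  have h1 : cofSum (DK p a a')
      = (-1 : R) ^ (p - 1) * ∑ k ∈ Finset.range p, a ^ k * a' ^ (p - 1 - k) := by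
    match p, hp with
    | 1, _ =>
      simp [cofSum, DK, Matrix.det_fin_zero]
    | (m + 2), _ =>
      set ψ : MvPolynomial (Fin 2) ℤ →+* R := (MvPolynomial.aeval ![a, a']).toRingHom with hψ
      have hx : ψ (MvPolynomial.X 0) = a := by simp [hψ]
      have hy : ψ (MvPolynomial.X 1) = a' := by simp [hψ]
      have h := congrArg ψ (poly_cof m)
      rw [← cofSum_map ψ, DK_map ψ, hx, hy] at h
      rw [h]
      simp only [_root_.map_mul, map_pow, map_neg, _root_.map_one, map_sum, hx, hy]
      norm_num
  refine ⟨h1, ?_⟩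
  rw [h1]
  have hg := geom_sum₂_mul a a' p
  linear_combination ((-1 : R) ^ (p - 1)) * hg
end

section
/- Let R be a commutative unital ring and T a tree on vertex set V = {1,…,n} with edge set E, where each edge {i,j} carries an additive weight a_{ij} = a_{ji} ∈ R and two directed multiplicative weights m_{i→j}, m_{j→i} ∈ R; for e = {i,j} write a_e = a_{ij} and (m_e, m'_e) = (m_{i→j}, m_{j→i}). Let D_T be the distance matrix with (D_T)_{ii} = 0 and (D_T)_{ij} = Σ_{l=0}^{k−1} a_{i_l i_{l+1}}(m_{i_l → i_{l+1}} − 1)·Π_{u=0}^{l−1} m_{i_u → i_{u+1}} along the unique path i = i_0, …, i_k = j. Assume every a_e and every m_e m'_e − 1 is invertible in R, and that α_T := Σ_{e ∈ E} a_e (m_e − 1)(m'_e − 1)(m_e m'_e − 1)^{-1} is invertible in R. Define: vectors τ_in, τ_out ∈ R^V by τ_in(i) = 1 − Σ_{j ∼ i} m_{j→i}(m_{i→j} − 1)(m_{i→j} m_{j→i} − 1)^{-1} and τ_out(i) = 1 − Σ_{j ∼ i} m_{i→j}(m_{j→i} − 1)(m_{i→j} m_{j→i} − 1)^{-1}; the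 Laplacian L ∈ R^{V×V} by L_{ij} = −m_{i→j}·(a_{ij}(m_{i→j} m_{j→i} − 1))^{-1} if i ∼ j, L_{ii} = Σ_{k ∼ i} m_{k→i}·(a_{ik}(m_{i→k} m_{k→i} − 1))^{-1}, and L_{ij} = 0 otherwise; for i ∼ j, T_{i→j} the subtree induced on i, j, and all vertices v whose path from i passes through j, with edge set E(T_{i→j}); scalars β_i := α_T^{-1}·Σ_{j ∼ i} a_{ij}^{-1}·( Σ_{e ∈ E(T_{i→j})} a_e(m_e − 1)(m'_e − 1)(m_e m'_e − 1)^{-1} ); and the matrix C ∈ R^{V×V} with C_{ii} = β_i and, for j ≠ i, C_{ij} = β_i − a_{ik}^{-1} where k is the neighbor of i on the path from i to j. Then D_T is invertible and D_T^{-1} = α_T^{-1}·τ_out·τ_inᵀ − L + C·diag(τ_in), where diag(τ_in) is the diagonal matrix with entries τ_in(i). -/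
/-- The edges of `G`, recorded as ordered pairs `(i, j)` with `i < j`. -/
def edgs {n : ℕ} (G : SimpleGraph (Fin n)) [DecidableRel G.Adj] :
    Finset (Fin n × Fin n) :=
  Finset.univ.filter fun p => p.1 < p.2 ∧ G.Adj p.1 p.2

/-- The weighted length of a walk, for additive weights `a` and multiplicative weights
`m` on directed edges: along `i = i₀ → i₁ → ⋯ → i_k = j` it is
`Σ_{l} a_{i_l i_{l+1}} (m_{i_l → i_{l+1}} − 1) Π_{u < l} m_{i_u → i_{u+1}}`. -/
def wWt {R : Type*} [CommRing R] {n : ℕ} {G : SimpleGraph (Fin n)}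
    (a m : Fin n → Fin n → R) {i j : Fin n} (p : G.Walk i j) : R :=
  p.darts.foldr
    (fun d acc => a d.toProd.1 d.toProd.2 * (m d.toProd.1 d.toProd.2 - 1)
      + m d.toProd.1 d.toProd.2 * acc) 0

open scoped Classical in
/-- The edges of the subtree `T_{i→j}` (for `i ∼ j`): the edges of `T` both of whose
endpoints lie in the set consisting of `i`, `j`, and all vertices `v` whose (unique)
path from `i` passes through `j`. -/
noncomputable def subEdges {n : ℕ} (G : SimpleGraph (Fin n)) [DecidableRel G.Adj]
    (i j : Fin n) : Finset (Fin n × Fin n) :=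
  (edgs G).filter fun p =>
    (p.1 = i ∨ ∀ q : G.Walk i p.1, q.IsPath → j ∈ q.support) ∧
    (p.2 = i ∨ ∀ q : G.Walk i p.2, q.IsPath → j ∈ q.support)

/-- The scalar `α_T = Σ_{e ∈ E} a_e (m_e − 1)(m'_e − 1)(m_e m'_e − 1)⁻¹`. -/
noncomputable def alphaT {R : Type*} [CommRing R] {n : ℕ} (G : SimpleGraph (Fin n))
    [DecidableRel G.Adj] (a m : Fin n → Fin n → R) : R :=
  ∑ e ∈ edgs G, a e.1 e.2 * ((m e.1 e.2 - 1) * (m e.2 e.1 - 1))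
    * Ring.inverse (m e.1 e.2 * m e.2 e.1 - 1)

/-- The vector `τ_in`: `τ_in(i) = 1 − Σ_{j ∼ i} m_{j→i}(m_{i→j} − 1)(m_{i→j} m_{j→i} − 1)⁻¹`. -/
noncomputable def tauIn {R : Type*} [CommRing R] {n : ℕ} (G : SimpleGraph (Fin n))
    [DecidableRel G.Adj] (m : Fin n → Fin n → R) (i : Fin n) : R :=
  1 - ∑ j ∈ G.neighborFinset i, m j i * (m i j - 1) * Ring.inverse (m i j * m j i - 1)

/-- The vector `τ_out`: `τ_out(i) = 1 − Σ_{j ∼ i} m_{i→j}(m_{j→i} − 1)(m_{i→j} m_{j→i} − 1)⁻¹`. -/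
noncomputable def tauOut {R : Type*} [CommRing R] {n : ℕ} (G : SimpleGraph (Fin n))
    [DecidableRel G.Adj] (m : Fin n → Fin n → R) (i : Fin n) : R :=
  1 - ∑ j ∈ G.neighborFinset i, m i j * (m j i - 1) * Ring.inverse (m i j * m j i - 1)

/-- The Laplacian matrix `L`: `L i j = −m_{i→j}·(a_{ij}(m_{i→j} m_{j→i} − 1))⁻¹` for
`i ∼ j`, `L i i = Σ_{k ∼ i} m_{k→i}·(a_{ik}(m_{i→k} m_{k→i} − 1))⁻¹`, else `0`. -/
noncomputable def lapT {R : Type*} [CommRing R] {n : ℕ} (G : SimpleGraph (Fin n))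
    [DecidableRel G.Adj] (a m : Fin n → Fin n → R) : Matrix (Fin n) (Fin n) R :=
  Matrix.of fun i j =>
    if i = j then
      ∑ kk ∈ G.neighborFinset i, m kk i * Ring.inverse (a i kk * (m i kk * m kk i - 1))
    else if G.Adj i j then
      -(m i j * Ring.inverse (a i j * (m i j * m j i - 1)))
    else 0

/-- The scalar `β_i = α_T⁻¹ · Σ_{j ∼ i} a_{ij}⁻¹ · Σ_{e ∈ E(T_{i→j})}
a_e (m_e − 1)(m'_e − 1)(m_e m'_e − 1)⁻¹`. -/
noncomputable def betaV {R : Type*} [CommRing R] {n : ℕ} (G : SimpleGraph (Fin n))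
    [DecidableRel G.Adj] (a m : Fin n → Fin n → R) (i : Fin n) : R :=
  Ring.inverse (alphaT G a m)
    * ∑ j ∈ G.neighborFinset i, Ring.inverse (a i j)
        * ∑ e ∈ subEdges G i j, a e.1 e.2 * ((m e.1 e.2 - 1) * (m e.2 e.1 - 1))
            * Ring.inverse (m e.1 e.2 * m e.2 e.1 - 1)


set_option linter.unusedSectionVars false
set_option maxHeartbeats 1000000

open SimpleGraph Finset

variable {n : ℕ} {G : SimpleGraph (Fin n)} [DecidableRel G.Adj]

noncomputable def pth (hG : G.IsTree) (i j : Fin n) : G.Walk i j :=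
  (hG.existsUnique_path i j).exists.choose

lemma pth_isPath (hG : G.IsTree) (i j : Fin n) : (pth hG i j).IsPath :=
  (hG.existsUnique_path i j).exists.choose_spec

lemma pth_eq (hG : G.IsTree) {i j : Fin n} (p : G.Walk i j) (hp : p.IsPath) :
    p = pth hG i j := by
  obtain ⟨q, hq, hu⟩ := hG.existsUnique_path i j
  rw [hu p hp, hu _ (pth_isPath hG i j)]

lemma pth_self (hG : G.IsTree) (i : Fin n) : pth hG i i = SimpleGraph.Walk.nil :=
  (pth_eq hG _ (SimpleGraph.Walk.IsPath.nil)).symm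

lemma pth_adj (hG : G.IsTree) {i j : Fin n} (h : G.Adj i j) :
    pth hG i j = SimpleGraph.Walk.cons h SimpleGraph.Walk.nil := by
  refine (pth_eq hG _ ?_).symm
  simp [SimpleGraph.Walk.cons_isPath_iff, h.ne]

lemma pth_reverse (hG : G.IsTree) (i j : Fin n) :
    (pth hG i j).reverse = pth hG j i :=
  pth_eq hG _ ((pth_isPath hG i j).reverse)

lemma pth_split (hG : G.IsTree) {i j u : Fin n} (h : u ∈ (pth hG i j).support) :
    pth hG i j = (pth hG i u).append (pth hG u j) := by
  obtain ⟨q, r, hqr⟩ := SimpleGraph.Walk.mem_support_iff_exists_append.mp h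
  have hp := pth_isPath hG i j
  rw [hqr] at hp ⊢
  rw [← pth_eq hG q hp.of_append_left, ← pth_eq hG r hp.of_append_right]

set_option linter.unusedSectionVars false

open scoped Classical in
noncomputable def Br (hG : G.IsTree) (i p : Fin n) : Finset (Fin n) :=
  Finset.univ.filter fun v => v ≠ i ∧ p ∈ (pth hG i v).support

lemma mem_Br {hG : G.IsTree} {i p v : Fin n} :
    v ∈ Br hG i p ↔ v ≠ i ∧ p ∈ (pth hG i v).support := by
  simp [Br]

lemma pth_cons_of_mem (hG : G.IsTree) {i p v : Fin n} (h : G.Adj i p)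
    (hv : v ∈ Br hG i p) : pth hG i v = SimpleGraph.Walk.cons h (pth hG p v) := by
  have := pth_split hG (mem_Br.mp hv).2
  rwa [pth_adj hG h, SimpleGraph.Walk.cons_append, SimpleGraph.Walk.nil_append] at this

lemma not_mem_support_of_mem_Br (hG : G.IsTree) {i p v : Fin n} (h : G.Adj i p)
    (hv : v ∈ Br hG i p) : i ∉ (pth hG p v).support := by
  have hp := pth_isPath hG i v
  rw [pth_cons_of_mem hG h hv, SimpleGraph.Walk.cons_isPath_iff] at hp
  exact hp.2

lemma mem_Br_of_not_mem_support (hG : G.IsTree) {i p v : Fin n} (h : G.Adj i p)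
    (hi : i ∉ (pth hG p v).support) : v ∈ Br hG i p := by
  have hpath : (SimpleGraph.Walk.cons h (pth hG p v)).IsPath :=
    (pth_isPath hG p v).cons hi
  have he : pth hG i v = SimpleGraph.Walk.cons h (pth hG p v) := (pth_eq hG _ hpath).symm
  refine mem_Br.mpr ⟨?_, ?_⟩
  · rintro rfl; exact hi (SimpleGraph.Walk.end_mem_support _)
  · rw [he]; simp

lemma mem_Br_self (hG : G.IsTree) {i p : Fin n} (h : G.Adj i p) : p ∈ Br hG i p := by
  refine mem_Br_of_not_mem_support hG h ?_
  rw [pth_self]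
  simp [h.ne]

/-- the second vertex of a path is unique -/
lemma second_unique (hG : G.IsTree) {i p p' v : Fin n} (hp : G.Adj i p) (hp' : G.Adj i p')
    (hv : v ∈ Br hG i p) (hv' : v ∈ Br hG i p') : p = p' := by
  have e1 := pth_cons_of_mem hG hp hv
  have e2 := pth_cons_of_mem hG hp' hv'
  have : (SimpleGraph.Walk.cons hp (pth hG p v)).support
      = (SimpleGraph.Walk.cons hp' (pth hG p' v)).support := by rw [← e1, ← e2]
  rw [SimpleGraph.Walk.support_cons, SimpleGraph.Walk.support_cons,
    SimpleGraph.Walk.support_eq_cons (pth hG p v),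
    SimpleGraph.Walk.support_eq_cons (pth hG p' v)] at this
  have := congrArg (fun l => l.tail.head?) this
  simpa only [List.tail_cons, List.head?_cons, Option.some.injEq] using this

lemma exists_branch (hG : G.IsTree) {i v : Fin n} (hvi : v ≠ i) :
    ∃ p, G.Adj i p ∧ v ∈ Br hG i p := by
  rcases hw : pth hG i v with _ | ⟨h, q⟩
  · exact absurd rfl hvi
  · next w =>
    refine ⟨w, h, mem_Br.mpr ⟨hvi, ?_⟩⟩
    rw [hw]
    simp

/-- a vertex on the path `i → j` with `j ∈ Br i p` and distinct from `i` is in `Br i p`. -/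
lemma mem_Br_of_mem_support (hG : G.IsTree) {i p j x : Fin n} (hp : G.Adj i p)
    (hj : j ∈ Br hG i p) (hx : x ∈ (pth hG i j).support) (hxi : x ≠ i) :
    x ∈ Br hG i p := by
  have hcons := pth_cons_of_mem hG hp hj
  have hxs : x ∈ (pth hG p j).support := by
    rw [hcons] at hx
    simp only [SimpleGraph.Walk.support_cons, List.mem_cons] at hx
    exact hx.resolve_left hxi
  have hsplit : pth hG p j = (pth hG p x).append (pth hG x j) := pth_split hG hxs
  have : pth hG i j = (SimpleGraph.Walk.cons hp (pth hG p x)).append (pth hG x j) := by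
    rw [hcons, hsplit, SimpleGraph.Walk.cons_append]
  have hpath : (SimpleGraph.Walk.cons hp (pth hG p x)).IsPath := by
    have hip := pth_isPath hG i j
    rw [this] at hip
    exact hip.of_append_left
  have hex : pth hG i x = SimpleGraph.Walk.cons hp (pth hG p x) := (pth_eq hG _ hpath).symm
  refine mem_Br.mpr ⟨hxi, ?_⟩
  rw [hex]
  simp

lemma Br_subset (hG : G.IsTree) {i p q : Fin n} (hip : G.Adj i p) (hq : G.Adj p q)
    (hqi : q ≠ i) : Br hG p q ⊆ Br hG i p := by
  intro v hv
  refine mem_Br_of_not_mem_support hG hip ?_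
  intro hi
  have hiB : i ∈ Br hG p q := mem_Br_of_mem_support hG hq hv hi (G.ne_of_adj hip)
  have hqs := (mem_Br.mp hiB).2
  rw [pth_adj hG hip.symm] at hqs
  simp only [SimpleGraph.Walk.support_cons, SimpleGraph.Walk.support_nil,
    List.mem_cons, List.mem_singleton] at hqs
  rcases hqs with h | h | h
  · exact (G.ne_of_adj hq).symm h
  · exact hqi h
  · exact absurd h List.not_mem_nil

lemma Br_cover (hG : G.IsTree) {i p v : Fin n} (hip : G.Adj i p) (hv : v ∈ Br hG i p)
    (hvp : v ≠ p) : ∃ q, G.Adj p q ∧ q ≠ i ∧ v ∈ Br hG p q := by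
  obtain ⟨q, hq, hvq⟩ := exists_branch hG hvp
  refine ⟨q, hq, ?_, hvq⟩
  intro rfl'
  exact not_mem_support_of_mem_Br hG hip hv (rfl' ▸ (mem_Br.mp hvq).2)

lemma adj_same_branch (hG : G.IsTree) {i p u v : Fin n} (hip : G.Adj i p)
    (hu : u ∈ Br hG i p) (huv : G.Adj u v) (hvi : v ≠ i) : v ∈ Br hG i p := by
  by_cases hcase : u ∈ (pth hG i v).support
  · refine mem_Br.mpr ⟨hvi, ?_⟩
    rw [pth_split hG hcase]
    exact (SimpleGraph.Walk.mem_support_append_iff _ _).mpr (Or.inl (mem_Br.mp hu).2)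
  · have hw : ((pth hG i v).append (SimpleGraph.Walk.cons huv.symm SimpleGraph.Walk.nil)).IsPath := by
      rw [SimpleGraph.Walk.isPath_def, SimpleGraph.Walk.support_append]
      simp only [SimpleGraph.Walk.support_cons, SimpleGraph.Walk.support_nil, List.tail_cons]
      rw [List.nodup_append]
      refine ⟨(pth_isPath hG i v).support_nodup, List.nodup_singleton u, ?_⟩
      intro x hx y hx' hxy
      subst hxy
      rw [List.mem_singleton] at hx'
      subst hx'
      exact hcase hx
    have he : pth hG i u = (pth hG i v).append (SimpleGraph.Walk.cons huv.symm SimpleGraph.Walk.nil) :=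
      (pth_eq hG _ hw).symm
    have hsup : (pth hG i u).support = (pth hG i v).support ++ [u] := by
      rw [he, SimpleGraph.Walk.support_append]
      simp
    have hp := (mem_Br.mp hu).2
    rw [hsup, List.mem_append, List.mem_singleton] at hp
    rcases hp with h | hpu
    · exact mem_Br.mpr ⟨hvi, h⟩
    · exfalso
      subst hpu
      have h2 : (pth hG i p).support = [i, p] := by rw [pth_adj hG hip]; simp
      rw [hsup] at h2
      have h3 : (pth hG i v).support = [i] := by
        have := congrArg List.dropLast h2
        simpa using this
      have hvs := SimpleGraph.Walk.end_mem_support (pth hG i v)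
      rw [h3, List.mem_singleton] at hvs
      exact hvi hvs

lemma sep (hG : G.IsTree) {c q j k : Fin n} (hq : G.Adj c q) (hj : j ∈ Br hG c q)
    (hk : k ∉ Br hG c q) (hkc : k ≠ c) : c ∈ (pth hG j k).support := by
  have hw : ((pth hG c j).reverse.append (pth hG c k)).IsPath := by
    rw [SimpleGraph.Walk.isPath_def, SimpleGraph.Walk.support_append,
      SimpleGraph.Walk.support_reverse, List.nodup_append]
    refine ⟨List.nodup_reverse.mpr (pth_isPath hG c j).support_nodup,
      (pth_isPath hG c k).support_nodup.sublist (List.tail_sublist _), ?_⟩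
    intro x hx y hx' hxy
    subst hxy
    rw [List.mem_reverse] at hx
    have hxc : x ≠ c := fun hxeq => by
      have hnd := (pth_isPath hG c k).support_nodup
      rw [SimpleGraph.Walk.support_eq_cons] at hnd
      exact (List.nodup_cons.mp hnd).1 (hxeq ▸ hx')
    have hxk : x ∈ (pth hG c k).support := by
      rw [SimpleGraph.Walk.support_eq_cons]
      exact List.mem_cons_of_mem _ hx'
    have hxB : x ∈ Br hG c q := mem_Br_of_mem_support hG hq hj hx hxc
    refine hk (mem_Br.mpr ⟨hkc, ?_⟩)
    rw [pth_split hG hxk]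
    exact (SimpleGraph.Walk.mem_support_append_iff _ _).mpr (Or.inl (mem_Br.mp hxB).2)
  have he : pth hG j k = (pth hG c j).reverse.append (pth hG c k) := (pth_eq hG _ hw).symm
  rw [he]
  refine (SimpleGraph.Walk.mem_support_append_iff _ _).mpr (Or.inl ?_)
  rw [SimpleGraph.Walk.support_reverse, List.mem_reverse]
  exact SimpleGraph.Walk.start_mem_support _

lemma not_mem_Br_of_adj (hG : G.IsTree) {p i q : Fin n} (hip : G.Adj p i) (hq : G.Adj p q)
    (hqi : q ≠ i) : i ∉ Br hG p q := by
  intro hiB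
  have hqs := (mem_Br.mp hiB).2
  rw [pth_adj hG hip] at hqs
  simp only [SimpleGraph.Walk.support_cons, SimpleGraph.Walk.support_nil, List.mem_cons,
    List.mem_singleton] at hqs
  rcases hqs with h | h | h
  · exact (G.ne_of_adj hq).symm h
  · exact hqi h
  · exact absurd h List.not_mem_nil

lemma branch_pairwise_disjoint (hG : G.IsTree) (i : Fin n) :
    Set.PairwiseDisjoint (G.neighborFinset i : Set (Fin n)) (Br hG i) := by
  intro p hp q hq hpq
  simp only [Finset.mem_coe, SimpleGraph.mem_neighborFinset] at hp hq
  exact Finset.disjoint_left.mpr fun v hv hv' => hpq (second_unique hG hp hq hv hv')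

lemma sum_univ_branches {R : Type*} [CommRing R] (hG : G.IsTree) (i : Fin n)
    (f : Fin n → R) :
    ∑ v, f v = f i + ∑ p ∈ G.neighborFinset i, ∑ v ∈ Br hG i p, f v := by
  have hcover : (Finset.univ : Finset (Fin n))
      = insert i ((G.neighborFinset i).biUnion (Br hG i)) := by
    ext v
    simp only [Finset.mem_univ, true_iff, Finset.mem_insert, Finset.mem_biUnion,
      SimpleGraph.mem_neighborFinset]
    by_cases hv : v = i
    · exact Or.inl hv
    · obtain ⟨p, hp, hvp⟩ := exists_branch hG hv
      exact Or.inr ⟨p, hp, hvp⟩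
  have hnot : i ∉ (G.neighborFinset i).biUnion (Br hG i) := by
    simp only [Finset.mem_biUnion, not_exists]
    rintro p ⟨hp, hip⟩
    exact (mem_Br.mp hip).1 rfl
  rw [hcover, Finset.sum_insert hnot, Finset.sum_biUnion (branch_pairwise_disjoint hG i)]

lemma Br_decomp (hG : G.IsTree) {i p : Fin n} (h : G.Adj i p) :
    Br hG i p = insert p (((G.neighborFinset p).erase i).biUnion (Br hG p)) := by
  ext v
  simp only [Finset.mem_insert, Finset.mem_biUnion, Finset.mem_erase,
    SimpleGraph.mem_neighborFinset]
  constructor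
  · intro hv
    by_cases hvp : v = p
    · exact Or.inl hvp
    · obtain ⟨q, hq, hqi, hvq⟩ := Br_cover hG h hv hvp
      exact Or.inr ⟨q, ⟨hqi, hq⟩, hvq⟩
  · rintro (rfl | ⟨q, ⟨hqi, hq⟩, hvq⟩)
    · exact mem_Br_self hG h
    · exact Br_subset hG h hq hqi hvq

lemma sum_Br_step {R : Type*} [CommRing R] (hG : G.IsTree) {i p : Fin n} (h : G.Adj i p)
    (f : Fin n → R) :
    ∑ v ∈ Br hG i p, f v
      = f p + ∑ q ∈ (G.neighborFinset p).erase i, ∑ v ∈ Br hG p q, f v := by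
  rw [Br_decomp hG h, Finset.sum_insert, Finset.sum_biUnion]
  · refine (branch_pairwise_disjoint hG p).subset ?_
    intro x hx
    exact Finset.mem_coe.mpr (Finset.mem_of_mem_erase (Finset.mem_coe.mp hx))
  · simp only [Finset.mem_biUnion, Finset.mem_erase, SimpleGraph.mem_neighborFinset, not_exists]
    rintro q ⟨⟨hqi, hq⟩, hpq⟩
    exact (mem_Br.mp hpq).1 rfl

lemma Br_card_lt (hG : G.IsTree) {i p q : Fin n} (hip : G.Adj i p) (hq : G.Adj p q)
    (hqi : q ≠ i) : (Br hG p q).card < (Br hG i p).card := by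
  refine Finset.card_lt_card ⟨Br_subset hG hip hq hqi, fun hsub => ?_⟩
  have := hsub (mem_Br_self hG hip)
  exact (mem_Br.mp this).1 rfl

lemma forall_path_iff (hG : G.IsTree) {i x p : Fin n} :
    (∀ q : G.Walk i x, q.IsPath → p ∈ q.support) ↔ p ∈ (pth hG i x).support := by
  constructor
  · exact fun h => h _ (pth_isPath hG i x)
  · intro h q hq
    rw [pth_eq hG q hq]
    exact h

open scoped Classical in
lemma mem_subEdges (hG : G.IsTree) {i p : Fin n} {e : Fin n × Fin n} :
    e ∈ subEdges G i p ↔ e ∈ edgs G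
      ∧ (e.1 = i ∨ p ∈ (pth hG i e.1).support)
      ∧ (e.2 = i ∨ p ∈ (pth hG i e.2).support) := by
  rw [subEdges, Finset.mem_filter]
  constructor
  · rintro ⟨h1, h2, h3⟩
    exact ⟨h1, h2.imp_right (forall_path_iff hG).mp, h3.imp_right (forall_path_iff hG).mp⟩
  · rintro ⟨h1, h2, h3⟩
    exact ⟨h1, h2.imp_right (forall_path_iff hG).mpr, h3.imp_right (forall_path_iff hG).mpr⟩

lemma cond_iff (hG : G.IsTree) {i p x : Fin n} (h : G.Adj i p) :
    (x = i ∨ p ∈ (pth hG i x).support) ↔ (x = i ∨ x ∈ Br hG i p) := by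
  by_cases hx : x = i
  · simp [hx]
  · simp only [hx, false_or]
    exact ⟨fun hp => mem_Br.mpr ⟨hx, hp⟩, fun hb => (mem_Br.mp hb).2⟩

lemma mem_subEdges' (hG : G.IsTree) {i p : Fin n} (h : G.Adj i p) {e : Fin n × Fin n} :
    e ∈ subEdges G i p ↔ e ∈ edgs G
      ∧ (e.1 = i ∨ e.1 ∈ Br hG i p) ∧ (e.2 = i ∨ e.2 ∈ Br hG i p) := by
  rw [mem_subEdges hG, cond_iff hG h, cond_iff hG h]

lemma mem_edgs {e : Fin n × Fin n} : e ∈ edgs G ↔ e.1 < e.2 ∧ G.Adj e.1 e.2 := by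
  simp [edgs]

lemma subEdges_subset_edgs {i p : Fin n} : subEdges G i p ⊆ edgs G := by
  classical
  intro e he
  exact Finset.mem_of_mem_filter e he

lemma subEdges_pairwise_disjoint (hG : G.IsTree) (i : Fin n) :
    Set.PairwiseDisjoint (G.neighborFinset i : Set (Fin n)) (fun p => subEdges G i p) := by
  intro p hp q hq hpq
  simp only [Finset.mem_coe, SimpleGraph.mem_neighborFinset] at hp hq
  refine Finset.disjoint_left.mpr fun e he he' => hpq ?_
  obtain ⟨hedg, h1, h2⟩ := (mem_subEdges' hG hp).mp he
  obtain ⟨-, h1', h2'⟩ := (mem_subEdges' hG hq).mp he'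
  have hne : e.1 ≠ e.2 := G.ne_of_adj (mem_edgs.mp hedg).2
  by_cases hx : e.1 = i
  · have h2i : e.2 ≠ i := fun hh => hne (hx.trans hh.symm)
    exact second_unique hG hp hq (h2.resolve_left h2i) (h2'.resolve_left h2i)
  · exact second_unique hG hp hq (h1.resolve_left hx) (h1'.resolve_left hx)

lemma edgs_decomp (hG : G.IsTree) (i : Fin n) :
    edgs G = (G.neighborFinset i).biUnion (fun p => subEdges G i p) := by
  refine Finset.Subset.antisymm ?_ ?_
  · intro e he
    obtain ⟨hlt, hadj⟩ := mem_edgs.mp he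
    rw [Finset.mem_biUnion]
    by_cases h1 : e.1 = i
    · refine ⟨e.2, SimpleGraph.mem_neighborFinset _ _ _ |>.mpr (h1 ▸ hadj), ?_⟩
      refine (mem_subEdges' hG (h1 ▸ hadj)).mpr ⟨he, Or.inl h1, Or.inr (mem_Br_self hG (h1 ▸ hadj))⟩
    · by_cases h2 : e.2 = i
      · have hadj' : G.Adj i e.1 := h2 ▸ hadj.symm
        refine ⟨e.1, SimpleGraph.mem_neighborFinset _ _ _ |>.mpr hadj', ?_⟩
        exact (mem_subEdges' hG hadj').mpr ⟨he, Or.inr (mem_Br_self hG hadj'), Or.inl h2⟩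
      · obtain ⟨p, hp, h1p⟩ := exists_branch hG h1
        have h2p : e.2 ∈ Br hG i p := adj_same_branch hG hp h1p hadj h2
        refine ⟨p, SimpleGraph.mem_neighborFinset _ _ _ |>.mpr hp, ?_⟩
        exact (mem_subEdges' hG hp).mpr ⟨he, Or.inr h1p, Or.inr h2p⟩
  · intro e he
    rw [Finset.mem_biUnion] at he
    obtain ⟨p, -, hep⟩ := he
    exact subEdges_subset_edgs hep

lemma sum_edgs_branches {R : Type*} [CommRing R] (hG : G.IsTree) (i : Fin n)
    (f : Fin n × Fin n → R) :
    ∑ e ∈ edgs G, f e = ∑ p ∈ G.neighborFinset i, ∑ e ∈ subEdges G i p, f e := by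
  rw [edgs_decomp hG i, Finset.sum_biUnion (subEdges_pairwise_disjoint hG i)]

/-- the ordered pair recording the edge `{i, p}`. -/
def eo (i p : Fin n) : Fin n × Fin n := if i < p then (i, p) else (p, i)

lemma eo_mem_edgs {i p : Fin n} (h : G.Adj i p) : eo i p ∈ edgs G := by
  rw [mem_edgs, eo]
  rcases lt_or_gt_of_ne (G.ne_of_adj h) with hlt | hlt
  · simp [hlt, h]
  · simp [not_lt_of_gt hlt, hlt, h.symm]

lemma eo_mem_subEdges (hG : G.IsTree) {i p : Fin n} (h : G.Adj i p) :
    eo i p ∈ subEdges G i p := by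
  refine (mem_subEdges' hG h).mpr ⟨eo_mem_edgs h, ?_, ?_⟩ <;> rw [eo] <;> split <;>
    simp [mem_Br_self hG h]

lemma subEdges_decomp (hG : G.IsTree) {i p : Fin n} (h : G.Adj i p) :
    subEdges G i p
      = insert (eo i p) (((G.neighborFinset p).erase i).biUnion (fun q => subEdges G p q)) := by
  refine Finset.Subset.antisymm ?_ ?_
  · intro e he
    obtain ⟨hedg, h1, h2⟩ := (mem_subEdges' hG h).mp he
    obtain ⟨hlt, hadj⟩ := mem_edgs.mp hedg
    rw [Finset.mem_insert, Finset.mem_biUnion]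
    by_cases hx1 : e.1 = i
    · have h2i : e.2 ≠ i := fun hh => G.ne_of_adj hadj (hx1.trans hh.symm)
      have h2B : e.2 ∈ Br hG i p := h2.resolve_left h2i
      have hadj2 : G.Adj i e.2 := hx1 ▸ hadj
      have hp2 : p ∈ (pth hG i e.2).support := (mem_Br.mp h2B).2
      rw [pth_adj hG hadj2] at hp2
      simp only [SimpleGraph.Walk.support_cons, SimpleGraph.Walk.support_nil, List.mem_cons,
        List.mem_singleton] at hp2
      have hpe2 : p = e.2 := by
        rcases hp2 with hh | hh | hh
        · exact absurd hh (G.ne_of_adj h).symm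
        · exact hh
        · exact absurd hh List.not_mem_nil
      refine Or.inl ?_
      rw [eo, if_pos (hx1 ▸ hpe2 ▸ hlt)]
      rw [Prod.ext_iff]
      exact ⟨hx1, hpe2.symm⟩
    · by_cases hx2 : e.2 = i
      · have h1B : e.1 ∈ Br hG i p := h1.resolve_left hx1
        have hadj1 : G.Adj i e.1 := hx2 ▸ hadj.symm
        have hp1 : p ∈ (pth hG i e.1).support := (mem_Br.mp h1B).2
        rw [pth_adj hG hadj1] at hp1
        simp only [SimpleGraph.Walk.support_cons, SimpleGraph.Walk.support_nil, List.mem_cons,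
          List.mem_singleton] at hp1
        have hpe1 : p = e.1 := by
          rcases hp1 with hh | hh | hh
          · exact absurd hh (G.ne_of_adj h).symm
          · exact hh
          · exact absurd hh List.not_mem_nil
        refine Or.inl ?_
        rw [eo, if_neg (by rw [hpe1, ← hx2]; exact not_lt_of_gt hlt)]
        rw [Prod.ext_iff]
        exact ⟨hpe1.symm, hx2⟩

      · have h1B : e.1 ∈ Br hG i p := h1.resolve_left hx1
        have h2B : e.2 ∈ Br hG i p := h2.resolve_left hx2
        refine Or.inr ?_
        by_cases he1p : e.1 = p
        · have hadjp : G.Adj p e.2 := he1p ▸ hadj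
          have h2i : e.2 ≠ i := hx2
          refine ⟨e.2, Finset.mem_erase.mpr ⟨(mem_Br.mp h2B).1, SimpleGraph.mem_neighborFinset
            _ _ _ |>.mpr hadjp⟩, ?_⟩
          exact (mem_subEdges' hG hadjp).mpr ⟨hedg, Or.inl he1p, Or.inr (mem_Br_self hG hadjp)⟩
        · by_cases he2p : e.2 = p
          · have hadjp : G.Adj p e.1 := he2p ▸ hadj.symm
            refine ⟨e.1, Finset.mem_erase.mpr ⟨(mem_Br.mp h1B).1, SimpleGraph.mem_neighborFinset
              _ _ _ |>.mpr hadjp⟩, ?_⟩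
            exact (mem_subEdges' hG hadjp).mpr ⟨hedg, Or.inr (mem_Br_self hG hadjp), Or.inl he2p⟩
          · obtain ⟨q, hq, hqi, h1q⟩ := Br_cover hG h h1B he1p
            have h2q : e.2 ∈ Br hG p q := adj_same_branch hG hq h1q hadj he2p
            refine ⟨q, Finset.mem_erase.mpr ⟨hqi, SimpleGraph.mem_neighborFinset _ _ _ |>.mpr hq⟩, ?_⟩
            exact (mem_subEdges' hG hq).mpr ⟨hedg, Or.inr h1q, Or.inr h2q⟩
  · intro e he
    rw [Finset.mem_insert, Finset.mem_biUnion] at he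
    rcases he with rfl | ⟨q, hq', heq⟩
    · exact eo_mem_subEdges hG h
    · obtain ⟨hqi, hq⟩ := Finset.mem_erase.mp hq'
      rw [SimpleGraph.mem_neighborFinset] at hq
      obtain ⟨hedg, h1, h2⟩ := (mem_subEdges' hG hq).mp heq
      refine (mem_subEdges' hG h).mpr ⟨hedg, ?_, ?_⟩
      · rcases h1 with rfl | h1B
        · exact Or.inr (mem_Br_self hG h)
        · exact Or.inr (Br_subset hG h hq hqi h1B)
      · rcases h2 with rfl | h2B
        · exact Or.inr (mem_Br_self hG h)
        · exact Or.inr (Br_subset hG h hq hqi h2B)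

lemma eo_not_mem (hG : G.IsTree) {i p : Fin n} (h : G.Adj i p) :
    eo i p ∉ ((G.neighborFinset p).erase i).biUnion (fun q => subEdges G p q) := by
  rw [Finset.mem_biUnion]
  rintro ⟨q, hq', heq⟩
  obtain ⟨hqi, hq⟩ := Finset.mem_erase.mp hq'
  rw [SimpleGraph.mem_neighborFinset] at hq
  obtain ⟨hedg, h1, h2⟩ := (mem_subEdges' hG hq).mp heq
  have hiB : i ∉ Br hG p q := not_mem_Br_of_adj hG h.symm hq hqi
  have hip : i ≠ p := G.ne_of_adj h
  have : (eo i p).1 = i ∧ (eo i p).2 = p ∨ (eo i p).1 = p ∧ (eo i p).2 = i := by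
    rw [eo]; split
    · exact Or.inl ⟨rfl, rfl⟩
    · exact Or.inr ⟨rfl, rfl⟩
  rcases this with ⟨e1, e2⟩ | ⟨e1, e2⟩
  · rcases h1 with h1 | h1
    · exact hip (e1 ▸ h1)
    · exact hiB (e1 ▸ h1)
  · rcases h2 with h2 | h2
    · exact hip (e2 ▸ h2)
    · exact hiB (e2 ▸ h2)

lemma sum_subEdges_step {R : Type*} [CommRing R] (hG : G.IsTree) {i p : Fin n} (h : G.Adj i p)
    (f : Fin n × Fin n → R) :
    ∑ e ∈ subEdges G i p, f e
      = f (eo i p) + ∑ q ∈ (G.neighborFinset p).erase i, ∑ e ∈ subEdges G p q, f e := by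
  rw [subEdges_decomp hG h, Finset.sum_insert (eo_not_mem hG h), Finset.sum_biUnion]
  refine (subEdges_pairwise_disjoint hG p).subset ?_
  intro x hx
  exact Finset.mem_coe.mpr (Finset.mem_of_mem_erase (Finset.mem_coe.mp hx))

/-- product of multiplicative weights along a walk -/
def mProd {R : Type*} [CommRing R] (m : Fin n → Fin n → R) {i j : Fin n}
    (p : G.Walk i j) : R :=
  (p.darts.map fun d => m d.toProd.1 d.toProd.2).prod

section Weights

variable {R : Type*} [CommRing R] (a m : Fin n → Fin n → R)

lemma wWt_nil {i : Fin n} : wWt a m (SimpleGraph.Walk.nil : G.Walk i i) = 0 := rfl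

lemma wWt_cons {i j k : Fin n} (h : G.Adj i j) (p : G.Walk j k) :
    wWt a m (SimpleGraph.Walk.cons h p) = a i j * (m i j - 1) + m i j * wWt a m p := rfl

lemma mProd_nil {i : Fin n} : mProd m (SimpleGraph.Walk.nil : G.Walk i i) = 1 := rfl

lemma mProd_cons {i j k : Fin n} (h : G.Adj i j) (p : G.Walk j k) :
    mProd m (SimpleGraph.Walk.cons h p) = m i j * mProd m p := by
  simp [mProd, SimpleGraph.Walk.darts_cons]

lemma wWt_append {i j k : Fin n} (p : G.Walk i j) (q : G.Walk j k) :
    wWt a m (p.append q) = wWt a m p + mProd m p * wWt a m q := by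
  induction p with
  | nil => simp [wWt_nil, mProd_nil, SimpleGraph.Walk.nil_append]
  | cons h t ih =>
      rw [SimpleGraph.Walk.cons_append, wWt_cons, wWt_cons, mProd_cons, ih]
      ring

lemma mProd_append {i j k : Fin n} (p : G.Walk i j) (q : G.Walk j k) :
    mProd m (p.append q) = mProd m p * mProd m q := by
  simp [mProd, SimpleGraph.Walk.darts_append]

/-- the weighted distance along the unique path -/
noncomputable def dd (hG : G.IsTree) (i j : Fin n) : R := wWt a m (pth hG i j)

lemma dd_self (hG : G.IsTree) (i : Fin n) : dd a m hG i i = 0 := by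
  rw [dd, pth_self]; rfl

lemma dd_adj (hG : G.IsTree) {i j : Fin n} (h : G.Adj i j) :
    dd a m hG i j = a i j * (m i j - 1) := by
  rw [dd, pth_adj hG h, wWt_cons, wWt_nil]; ring

lemma dd_split (hG : G.IsTree) {i j u : Fin n} (h : u ∈ (pth hG i j).support) :
    dd a m hG i j = dd a m hG i u + mProd m (pth hG i u) * dd a m hG u j := by
  rw [dd, pth_split hG h, wWt_append]; rfl

lemma mProd_pth_split (hG : G.IsTree) {i j u : Fin n} (h : u ∈ (pth hG i j).support) :
    mProd m (pth hG i j) = mProd m (pth hG i u) * mProd m (pth hG u j) := by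
  rw [pth_split hG h, mProd_append]

lemma mProd_adj (hG : G.IsTree) {i j : Fin n} (h : G.Adj i j) :
    mProd m (pth hG i j) = m i j := by
  rw [pth_adj hG h, mProd_cons, mProd_nil, mul_one]

lemma dd_branch (hG : G.IsTree) {i p v : Fin n} (h : G.Adj i p) (hv : v ∈ Br hG i p) :
    dd a m hG i v = a i p * (m i p - 1) + m i p * dd a m hG p v := by
  rw [dd, pth_cons_of_mem hG h hv, wWt_cons]; rfl

lemma dd_out (hG : G.IsTree) {i p v : Fin n} (h : G.Adj i p) (hv : v ∉ Br hG i p)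
    (hvi : v ≠ i) : dd a m hG p v = a p i * (m p i - 1) + m p i * dd a m hG i v := by
  have hps : p ∉ (pth hG i v).support := fun hc => hv (mem_Br.mpr ⟨hvi, hc⟩)
  have hpath : (SimpleGraph.Walk.cons h.symm (pth hG i v)).IsPath :=
    (pth_isPath hG i v).cons hps
  have he : pth hG p v = SimpleGraph.Walk.cons h.symm (pth hG i v) := (pth_eq hG _ hpath).symm
  rw [dd, he, wWt_cons]; rfl

lemma mem_support_rev (hG : G.IsTree) {i j u : Fin n} (h : u ∈ (pth hG i j).support) :
    u ∈ (pth hG j i).support := by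
  rw [← pth_reverse hG i j, SimpleGraph.Walk.support_reverse, List.mem_reverse]
  exact h

lemma mProd_to_center (hG : G.IsTree) {i p v : Fin n} (h : G.Adj i p) (hv : v ∈ Br hG i p) :
    mProd m (pth hG v i) = mProd m (pth hG v p) * m p i := by
  have hp : p ∈ (pth hG v i).support := mem_support_rev hG (mem_Br.mp hv).2
  rw [mProd_pth_split m hG hp, mProd_adj m hG h.symm]

end Weights

section Algebra

variable {R : Type*} [CommRing R]

/-- `s_{ij} = (m_{ij} - 1)/(m_{ij} m_{ji} - 1)` -/
noncomputable def sfun (m : Fin n → Fin n → R) (i j : Fin n) : R :=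
  (m i j - 1) * Ring.inverse (m i j * m j i - 1)

lemma inverse_symm (m : Fin n → Fin n → R) (i j : Fin n) :
    Ring.inverse (m j i * m i j - 1) = Ring.inverse (m i j * m j i - 1) := by
  rw [mul_comm]

lemma s_mul {m : Fin n → Fin n → R} {i j : Fin n} (hm : IsUnit (m i j * m j i - 1)) :
    m j i * sfun m i j = 1 - sfun m j i := by
  have h := Ring.mul_inverse_cancel _ hm
  unfold sfun
  rw [inverse_symm m i j]
  linear_combination h

lemma tauIn_eq {m : Fin n → Fin n → R}
    (hminv : ∀ i j : Fin n, G.Adj i j → IsUnit (m i j * m j i - 1)) (v : Fin n) :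
    tauIn G m v = 1 - ∑ j ∈ G.neighborFinset v, (1 - sfun m j v) := by
  unfold tauIn
  congr 1
  refine Finset.sum_congr rfl fun j hj => ?_
  have hadj : G.Adj v j := (SimpleGraph.mem_neighborFinset _ _ _).mp hj
  rw [mul_assoc, ← sfun]
  exact s_mul (hminv v j hadj)

lemma tauOut_eq {m : Fin n → Fin n → R}
    (hminv : ∀ i j : Fin n, G.Adj i j → IsUnit (m i j * m j i - 1)) (v : Fin n) :
    tauOut G m v = 1 - ∑ j ∈ G.neighborFinset v, (1 - sfun m v j) := by
  unfold tauOut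
  congr 1
  refine Finset.sum_congr rfl fun j hj => ?_
  have hadj : G.Adj v j := (SimpleGraph.mem_neighborFinset _ _ _).mp hj
  rw [mul_assoc, ← inverse_symm m v j, ← sfun]
  exact s_mul (hminv j v hadj.symm)

/-- The `α`-summand of an edge. -/
noncomputable def fEdge (a m : Fin n → Fin n → R) (e : Fin n × Fin n) : R :=
  a e.1 e.2 * ((m e.1 e.2 - 1) * (m e.2 e.1 - 1)) * Ring.inverse (m e.1 e.2 * m e.2 e.1 - 1)

lemma alphaT_eq (a m : Fin n → Fin n → R) :
    alphaT G a m = ∑ e ∈ edgs G, fEdge a m e := rfl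

lemma fEdge_eo {a m : Fin n → Fin n → R} {i p : Fin n} (h : G.Adj i p)
    (ha : ∀ i j : Fin n, G.Adj i j → a i j = a j i) :
    fEdge a m (eo i p) = a i p * ((m i p - 1) * sfun m p i) := by
  rw [eo]; unfold fEdge sfun
  split
  · rw [inverse_symm m i p]
    ring
  · rw [ha i p h, inverse_symm m i p]
    ring

lemma betaV_eq (a m : Fin n → Fin n → R) (i : Fin n) :
    betaV G a m i = Ring.inverse (alphaT G a m)
      * ∑ j ∈ G.neighborFinset i, Ring.inverse (a i j) * ∑ e ∈ subEdges G i j, fEdge a m e :=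
  rfl

end Algebra

section ABC

variable {R : Type*} [CommRing R]

lemma sfun_swap (a m : Fin n → Fin n → R) {i p : Fin n} (h : G.Adj i p)
    (ha : ∀ i j : Fin n, G.Adj i j → a i j = a j i) :
    sfun m i p * (a p i * (m p i - 1)) = a i p * ((m i p - 1) * sfun m p i) := by
  unfold sfun
  rw [ha i p h, inverse_symm m i p]
  ring

lemma ABC (hG : G.IsTree) (a m : Fin n → Fin n → R)
    (ha : ∀ i j : Fin n, G.Adj i j → a i j = a j i)
    (hminv : ∀ i j : Fin n, G.Adj i j → IsUnit (m i j * m j i - 1)) :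
    ∀ N : ℕ, ∀ i p : Fin n, G.Adj i p → (Br hG i p).card ≤ N →
      (∑ j ∈ Br hG i p, tauIn G m j * dd a m hG j i = ∑ e ∈ subEdges G i p, fEdge a m e)
      ∧ (∑ j ∈ Br hG i p, tauIn G m j * mProd m (pth hG j i) = 1 - sfun m p i)
      ∧ (∀ k ∈ Br hG i p, ∑ j ∈ Br hG i p, tauIn G m j * dd a m hG j k
          = (∑ e ∈ subEdges G i p, fEdge a m e) - sfun m p i * dd a m hG i k) := by
  intro N
  induction N with
  | zero =>
      intro i p h hc
      exfalso
      rw [Nat.le_zero, Finset.card_eq_zero] at hc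
      exact Finset.notMem_empty p (hc ▸ mem_Br_self hG h)
  | succ N ih =>
      intro i p h hc
      have hpi : G.Adj p i := h.symm
      set Nb := (G.neighborFinset p).erase i with hNb
      have hadj_of : ∀ q ∈ Nb, G.Adj p q ∧ q ≠ i := by
        intro q hq
        obtain ⟨hqi, hq'⟩ := Finset.mem_erase.mp hq
        exact ⟨(SimpleGraph.mem_neighborFinset _ _ _).mp hq', hqi⟩
      have hcard : ∀ q ∈ Nb, (Br hG p q).card ≤ N := by
        intro q hq
        obtain ⟨hq', hqi⟩ := hadj_of q hq
        exact Nat.lt_succ_iff.mp (lt_of_lt_of_le (Br_card_lt hG h hq' hqi) hc)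
      have hiNbr : i ∈ G.neighborFinset p := (SimpleGraph.mem_neighborFinset _ _ _).mpr hpi
      -- τ(p) + ∑_{q ∈ Nb} (1 - s_{qp}) = s_{ip}
      have hτp : tauIn G m p + ∑ q ∈ Nb, (1 - sfun m q p) = sfun m i p := by
        rw [tauIn_eq hminv p, ← Finset.add_sum_erase _ _ hiNbr]
        ring
      have hEdge : ∑ e ∈ subEdges G i p, fEdge a m e
          = fEdge a m (eo i p) + ∑ q ∈ Nb, ∑ e ∈ subEdges G p q, fEdge a m e :=
        sum_subEdges_step hG h (fEdge a m)
      have hfEo : fEdge a m (eo i p) = a i p * ((m i p - 1) * sfun m p i) := fEdge_eo h ha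
      -- (A)
      have hA : ∑ j ∈ Br hG i p, tauIn G m j * dd a m hG j i
          = ∑ e ∈ subEdges G i p, fEdge a m e := by
        rw [sum_Br_step hG h]
        have hinner : ∀ q ∈ Nb, ∑ j ∈ Br hG p q, tauIn G m j * dd a m hG j i
            = (∑ e ∈ subEdges G p q, fEdge a m e) + (1 - sfun m q p) * dd a m hG p i := by
          intro q hq
          obtain ⟨hq', hqi⟩ := hadj_of q hq
          obtain ⟨ihA, ihB, -⟩ := ih p q hq' (hcard q hq)
          have : ∀ j ∈ Br hG p q, tauIn G m j * dd a m hG j i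
              = tauIn G m j * dd a m hG j p
                + tauIn G m j * mProd m (pth hG j p) * dd a m hG p i := by
            intro j hj
            have hpjk : p ∈ (pth hG j i).support :=
              sep hG hq' hj (not_mem_Br_of_adj hG hpi hq' hqi) (G.ne_of_adj h)
            rw [dd_split a m hG hpjk]
            ring
          rw [Finset.sum_congr rfl this, Finset.sum_add_distrib, ihA, ← Finset.sum_mul]
          rw [show (∑ j ∈ Br hG p q, tauIn G m j * mProd m (pth hG j p)) = 1 - sfun m q p from ihB]
        rw [Finset.sum_congr rfl hinner, Finset.sum_add_distrib, ← Finset.sum_mul, hEdge]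
        have hddpi : dd a m hG p i = a p i * (m p i - 1) := dd_adj a m hG hpi
        have hsw : sfun m i p * (a p i * (m p i - 1)) = a i p * ((m i p - 1) * sfun m p i) :=
          sfun_swap a m h ha
        linear_combination dd a m hG p i * hτp + sfun m i p * hddpi + hsw - hfEo
      refine ⟨hA, ?_, ?_⟩
      -- (B)
      · rw [sum_Br_step hG h]
        have hinner : ∀ q ∈ Nb, ∑ j ∈ Br hG p q, tauIn G m j * mProd m (pth hG j i)
            = (1 - sfun m q p) * m p i := by
          intro q hq
          obtain ⟨hq', hqi⟩ := hadj_of q hq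
          obtain ⟨-, ihB, -⟩ := ih p q hq' (hcard q hq)
          have : ∀ j ∈ Br hG p q, tauIn G m j * mProd m (pth hG j i)
              = tauIn G m j * mProd m (pth hG j p) * m p i := by
            intro j hj
            rw [mProd_to_center m hG h (Br_subset hG h hq' hqi hj), mul_assoc]
          rw [Finset.sum_congr rfl this, ← Finset.sum_mul, ihB]
        rw [Finset.sum_congr rfl hinner, ← Finset.sum_mul, mProd_adj m hG hpi]
        have hs := s_mul (hminv i p h)
        linear_combination (m p i) * hτp + hs
      -- (C)
      · intro k hk
        by_cases hkp : k = p
        · rw [hkp, sum_Br_step hG h]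
          have hinner : ∀ q ∈ Nb, ∑ j ∈ Br hG p q, tauIn G m j * dd a m hG j p
              = ∑ e ∈ subEdges G p q, fEdge a m e := by
            intro q hq
            obtain ⟨hq', hqi⟩ := hadj_of q hq
            exact (ih p q hq' (hcard q hq)).1
          rw [Finset.sum_congr rfl hinner, dd_self]
          have hddip : dd a m hG i p = a i p * (m i p - 1) := dd_adj a m hG h
          linear_combination -hEdge + sfun m p i * hddip - hfEo
        · obtain ⟨q0, hq0, hq0i, hkq0⟩ := Br_cover hG h hk hkp
          have hq0Nb : q0 ∈ Nb := Finset.mem_erase.mpr ⟨hq0i,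
            (SimpleGraph.mem_neighborFinset _ _ _).mpr hq0⟩
          rw [sum_Br_step hG h]
          have hinner : ∀ q ∈ Nb, ∑ j ∈ Br hG p q, tauIn G m j * dd a m hG j k
              = if q = q0 then
                  (∑ e ∈ subEdges G p q, fEdge a m e) - sfun m q p * dd a m hG p k
                else
                  (∑ e ∈ subEdges G p q, fEdge a m e) + (1 - sfun m q p) * dd a m hG p k := by
            intro q hq
            obtain ⟨hq', hqi⟩ := hadj_of q hq
            obtain ⟨ihA, ihB, ihC⟩ := ih p q hq' (hcard q hq)
            by_cases hqq0 : q = q0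
            · subst hqq0
              rw [if_pos rfl]
              exact ihC k hkq0
            · rw [if_neg hqq0]
              have hknot : k ∉ Br hG p q := by
                intro hkq
                exact hqq0 (second_unique hG hq' hq0 hkq hkq0)
              have : ∀ j ∈ Br hG p q, tauIn G m j * dd a m hG j k
                  = tauIn G m j * dd a m hG j p
                    + tauIn G m j * mProd m (pth hG j p) * dd a m hG p k := by
                intro j hj
                have hpjk : p ∈ (pth hG j k).support := sep hG hq' hj hknot hkp
                rw [dd_split a m hG hpjk]
                ring
              rw [Finset.sum_congr rfl this, Finset.sum_add_distrib, ihA, ← Finset.sum_mul, ihB]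
          have hinner2 : ∀ q ∈ Nb, ((if q = q0 then
                  (∑ e ∈ subEdges G p q, fEdge a m e) - sfun m q p * dd a m hG p k
                else
                  (∑ e ∈ subEdges G p q, fEdge a m e) + (1 - sfun m q p) * dd a m hG p k) : R)
              = (∑ e ∈ subEdges G p q, fEdge a m e) + (1 - sfun m q p) * dd a m hG p k
                - (if q = q0 then dd a m hG p k else 0) := by
            intro q hq
            by_cases hqq0 : q = q0
            · rw [if_pos hqq0, if_pos hqq0]; ring
            · rw [if_neg hqq0, if_neg hqq0]; ring
          rw [Finset.sum_congr rfl hinner,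
            Finset.sum_congr rfl hinner2, Finset.sum_sub_distrib, Finset.sum_add_distrib,
            ← Finset.sum_mul, Finset.sum_ite_eq' Nb q0 (fun _ => dd a m hG p k),
            if_pos hq0Nb]
          have hddik : dd a m hG i k = a i p * (m i p - 1) + m i p * dd a m hG p k :=
            dd_branch a m hG h hk
          have hs : m i p * sfun m p i = 1 - sfun m i p := s_mul (hminv p i hpi)
          rw [hEdge]
          linear_combination dd a m hG p k * hτp + sfun m p i * hddik - hfEo
            + dd a m hG p k * hs


lemma master (hG : G.IsTree) (a m : Fin n → Fin n → R)
    (ha : ∀ i j : Fin n, G.Adj i j → a i j = a j i)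
    (hminv : ∀ i j : Fin n, G.Adj i j → IsUnit (m i j * m j i - 1)) (k : Fin n) :
    ∑ j, tauIn G m j * dd a m hG j k = alphaT G a m := by
  rw [sum_univ_branches hG k (fun j => tauIn G m j * dd a m hG j k), dd_self, mul_zero, zero_add,
    alphaT_eq, sum_edgs_branches hG k (fEdge a m)]
  refine Finset.sum_congr rfl fun p hp => ?_
  have hadj : G.Adj k p := (SimpleGraph.mem_neighborFinset _ _ _).mp hp
  exact (ABC hG a m ha hminv (Br hG k p).card k p hadj le_rfl).1

lemma lapT_row (hG : G.IsTree) (a m : Fin n → Fin n → R) (i k : Fin n) :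
    ∑ j, lapT G a m i j * dd a m hG j k
      = ∑ j ∈ G.neighborFinset i, (m j i * dd a m hG i k - m i j * dd a m hG j k)
          * Ring.inverse (a i j * (m i j * m j i - 1)) := by
  rw [← Finset.add_sum_erase Finset.univ _ (Finset.mem_univ i)]
  have hzero : ∀ j ∈ Finset.univ.erase i, j ∉ G.neighborFinset i
      → lapT G a m i j * dd a m hG j k = 0 := by
    intro j hj hnbr
    have hji : i ≠ j := fun hh => (Finset.mem_erase.mp hj).1 hh.symm
    have hadj : ¬ G.Adj i j := fun hh => hnbr ((SimpleGraph.mem_neighborFinset _ _ _).mpr hh)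
    simp [lapT, hji, hadj]
  have hsub : G.neighborFinset i ⊆ Finset.univ.erase i := by
    intro j hj
    exact Finset.mem_erase.mpr ⟨fun hh => G.ne_of_adj
      ((SimpleGraph.mem_neighborFinset _ _ _).mp hj) hh.symm, Finset.mem_univ j⟩
  rw [← Finset.sum_subset hsub hzero]
  have hdiag : lapT G a m i i * dd a m hG i k
      = ∑ j ∈ G.neighborFinset i, m j i * Ring.inverse (a i j * (m i j * m j i - 1))
          * dd a m hG i k := by
    rw [lapT]
    simp only [Matrix.of_apply, if_pos rfl, if_true]
    rw [Finset.sum_mul]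
  rw [hdiag, ← Finset.sum_add_distrib]
  refine Finset.sum_congr rfl fun j hj => ?_
  have hadj : G.Adj i j := (SimpleGraph.mem_neighborFinset _ _ _).mp hj
  have : lapT G a m i j = -(m i j * Ring.inverse (a i j * (m i j * m j i - 1))) := by
    rw [lapT]
    simp only [Matrix.of_apply, if_neg (G.ne_of_adj hadj), if_pos hadj]
  rw [this]
  ring

lemma rowL_diag (hG : G.IsTree) (a m : Fin n → Fin n → R)
    (ha : ∀ i j : Fin n, G.Adj i j → a i j = a j i)
    (hminv : ∀ i j : Fin n, G.Adj i j → IsUnit (m i j * m j i - 1))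
    (hainv : ∀ i j : Fin n, G.Adj i j → IsUnit (a i j)) (i : Fin n) :
    ∑ j, lapT G a m i j * dd a m hG j i = tauOut G m i - 1 := by
  rw [lapT_row hG a m i i]
  have hterm : ∀ j ∈ G.neighborFinset i,
      (m j i * dd a m hG i i - m i j * dd a m hG j i)
          * Ring.inverse (a i j * (m i j * m j i - 1)) = -(1 - sfun m i j) := by
    intro j hj
    have hadj : G.Adj i j := (SimpleGraph.mem_neighborFinset _ _ _).mp hj
    have h1 := Ring.mul_inverse_cancel _ (hminv i j hadj)
    have h2 := Ring.mul_inverse_cancel _ (hainv i j hadj)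
    rw [dd_self, dd_adj a m hG hadj.symm, ha j i hadj.symm, Ring.mul_inverse_rev]
    unfold sfun
    linear_combination (-(m i j * (m j i - 1) * Ring.inverse (m i j * m j i - 1))) * h2 - h1
  rw [Finset.sum_congr rfl hterm, tauOut_eq hminv i]
  rw [Finset.sum_neg_distrib]
  ring

lemma rowL_off (hG : G.IsTree) (a m : Fin n → Fin n → R)
    (ha : ∀ i j : Fin n, G.Adj i j → a i j = a j i)
    (hminv : ∀ i j : Fin n, G.Adj i j → IsUnit (m i j * m j i - 1))
    (hainv : ∀ i j : Fin n, G.Adj i j → IsUnit (a i j))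
    {i j0 k : Fin n} (hj0 : G.Adj i j0) (hk : k ∈ Br hG i j0) :
    ∑ j, lapT G a m i j * dd a m hG j k
      = tauOut G m i + (Ring.inverse (a i j0)
          - ∑ p ∈ G.neighborFinset i, Ring.inverse (a i p) * (1 - sfun m p i))
            * dd a m hG i k := by
  have hki : k ≠ i := (mem_Br.mp hk).1
  have hj0nbr : j0 ∈ G.neighborFinset i := (SimpleGraph.mem_neighborFinset _ _ _).mpr hj0
  rw [lapT_row hG a m i k]
  have hterm : ∀ j ∈ G.neighborFinset i,
      (m j i * dd a m hG i k - m i j * dd a m hG j k)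
          * Ring.inverse (a i j * (m i j * m j i - 1))
      = -((1 - sfun m j i) * Ring.inverse (a i j)) * dd a m hG i k - (1 - sfun m i j)
        + (if j = j0 then Ring.inverse (a i j) * dd a m hG i k + 1 else 0) := by
    intro j hj
    have hadj : G.Adj i j := (SimpleGraph.mem_neighborFinset _ _ _).mp hj
    have h1 := Ring.mul_inverse_cancel _ (hminv i j hadj)
    have h2 := Ring.mul_inverse_cancel _ (hainv i j hadj)
    rw [Ring.mul_inverse_rev]
    by_cases hjj0 : j = j0
    · rw [if_pos hjj0]
      have hkj : k ∈ Br hG i j := by rw [hjj0]; exact hk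
      have hddik : dd a m hG i k = a i j * (m i j - 1) + m i j * dd a m hG j k :=
        dd_branch a m hG hadj hkj
      unfold sfun
      rw [inverse_symm m i j]
      linear_combination (Ring.inverse (m i j * m j i - 1) * Ring.inverse (a i j)) * hddik
        + ((m i j - 1) * Ring.inverse (m i j * m j i - 1)) * h2
    · rw [if_neg hjj0]
      have hknot : k ∉ Br hG i j := fun hc => hjj0 (second_unique hG hadj hj0 hc hk)
      have hddjk : dd a m hG j k = a j i * (m j i - 1) + m j i * dd a m hG i k :=
        dd_out a m hG hadj hknot hki
      rw [hddjk, ha j i hadj.symm]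
      unfold sfun
      rw [inverse_symm m i j]
      linear_combination (-(m i j * (m j i - 1) * Ring.inverse (m i j * m j i - 1))) * h2
        - (1 + Ring.inverse (a i j) * dd a m hG i k) * h1
  rw [Finset.sum_congr rfl hterm, Finset.sum_add_distrib, Finset.sum_sub_distrib,
    Finset.sum_ite_eq' _ j0 _, if_pos hj0nbr, tauOut_eq hminv i]
  have e1 : ∀ j ∈ G.neighborFinset i,
      -((1 - sfun m j i) * Ring.inverse (a i j)) * dd a m hG i k
        = -(Ring.inverse (a i j) * (1 - sfun m j i)) * dd a m hG i k := by
    intro j _; ring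
  rw [Finset.sum_congr rfl e1, ← Finset.sum_mul, Finset.sum_neg_distrib]
  ring

end ABC
-- FINAL

-- MARKER

/-- Closed form of the inverse of the general distance matrix of a tree.
`T` is a tree on `{1,…,n}` whose edge `{i,j}` carries an additive weight
`a i j = a j i` and directed multiplicative weights `m i j`, `m j i`, with
distance matrix `D`. Assume every `a_e`, every `m_e m'_e − 1`, and
`α_T = Σ_{e} a_e (m_e − 1)(m'_e − 1)(m_e m'_e − 1)⁻¹` are units of `R`. Let `C` be
the matrix with `C i i = β_i` and `C i j = β_i − a_{ik}⁻¹` for `j ≠ i`, where `k` is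
the neighbour of `i` on the path from `i` to `j`. Then `D` is invertible and
`D⁻¹ = α_T⁻¹ · τ_out τ_inᵀ − L + C · diag(τ_in)`. -/
theorem stmt_16 {R : Type*} [CommRing R] {n : ℕ}
    (G : SimpleGraph (Fin n)) [DecidableRel G.Adj] (hG : G.IsTree)
    (a m : Fin n → Fin n → R)
    (ha : ∀ i j : Fin n, G.Adj i j → a i j = a j i)
    (D : Matrix (Fin n) (Fin n) R)
    (hD : ∀ (i j : Fin n) (p : G.Walk i j), p.IsPath → D i j = wWt a m p)
    (hainv : ∀ i j : Fin n, G.Adj i j → IsUnit (a i j))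
    (hminv : ∀ i j : Fin n, G.Adj i j → IsUnit (m i j * m j i - 1))
    (halpha : IsUnit (alphaT G a m))
    (C : Matrix (Fin n) (Fin n) R)
    (hCdiag : ∀ i : Fin n, C i i = betaV G a m i)
    (hCoff : ∀ i j kk : Fin n, i ≠ j → G.Adj i kk →
      (∀ p : G.Walk i j, p.IsPath → kk ∈ p.support) →
      C i j = betaV G a m i - Ring.inverse (a i kk)) :
    IsUnit D ∧
    D⁻¹ = Ring.inverse (alphaT G a m) • Matrix.vecMulVec (tauOut G m) (tauIn G m)
          - lapT G a m + C * Matrix.diagonal (tauIn G m) := by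
  classical
  have hDd : ∀ x y : Fin n, D x y = dd a m hG x y := fun x y =>
    hD x y (pth hG x y) (pth_isPath hG x y)
  have halphainv : Ring.inverse (alphaT G a m) * alphaT G a m = 1 :=
    Ring.inverse_mul_cancel _ halpha
  have key : (Ring.inverse (alphaT G a m) • Matrix.vecMulVec (tauOut G m) (tauIn G m)
      - lapT G a m + C * Matrix.diagonal (tauIn G m)) * D = 1 := by
    ext i k
    rw [Matrix.mul_apply, Matrix.one_apply]
    have hentry : ∀ j, (Ring.inverse (alphaT G a m) • Matrix.vecMulVec (tauOut G m) (tauIn G m)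
        - lapT G a m + C * Matrix.diagonal (tauIn G m)) i j * D j k
        = Ring.inverse (alphaT G a m) * tauOut G m i * (tauIn G m j * dd a m hG j k)
          - lapT G a m i j * dd a m hG j k
          + C i j * tauIn G m j * dd a m hG j k := by
      intro j
      rw [hDd]
      simp only [Matrix.sub_apply, Matrix.add_apply, Matrix.smul_apply,
        Matrix.vecMulVec_apply, Matrix.mul_diagonal, smul_eq_mul]
      ring
    rw [Finset.sum_congr rfl fun j _ => hentry j, Finset.sum_add_distrib,
      Finset.sum_sub_distrib, ← Finset.mul_sum, master hG a m ha hminv k]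
    -- the beta-alpha identity
    have hβα : betaV G a m i * alphaT G a m
        = ∑ p ∈ G.neighborFinset i, Ring.inverse (a i p)
            * ∑ e ∈ subEdges G i p, fEdge a m e := by
      rw [betaV_eq]
      linear_combination (∑ p ∈ G.neighborFinset i, Ring.inverse (a i p)
        * ∑ e ∈ subEdges G i p, fEdge a m e) * halphainv
    -- the C-row sum
    have hCval : ∀ p ∈ G.neighborFinset i, ∀ j ∈ Br hG i p,
        C i j = betaV G a m i - Ring.inverse (a i p) := by
      intro p hp j hj
      have hadj : G.Adj i p := (SimpleGraph.mem_neighborFinset _ _ _).mp hp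
      refine hCoff i j p (fun hh => (mem_Br.mp hj).1 hh.symm) hadj ?_
      intro w hw
      rw [pth_eq hG w hw]
      exact (mem_Br.mp hj).2
    have hCsum : ∑ j, C i j * tauIn G m j * dd a m hG j k
        = betaV G a m i * alphaT G a m
          - ∑ p ∈ G.neighborFinset i, Ring.inverse (a i p)
              * ∑ j ∈ Br hG i p, tauIn G m j * dd a m hG j k := by
      rw [sum_univ_branches hG i (fun j => C i j * tauIn G m j * dd a m hG j k), hCdiag i]
      have hje : ∀ p ∈ G.neighborFinset i, ∑ j ∈ Br hG i p,
          C i j * tauIn G m j * dd a m hG j k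
          = betaV G a m i * (∑ j ∈ Br hG i p, tauIn G m j * dd a m hG j k)
            - Ring.inverse (a i p) * (∑ j ∈ Br hG i p, tauIn G m j * dd a m hG j k) := by
        intro p hp
        rw [Finset.mul_sum, Finset.mul_sum, ← Finset.sum_sub_distrib]
        refine Finset.sum_congr rfl fun j hj => ?_
        rw [hCval p hp j hj]
        ring
      rw [Finset.sum_congr rfl hje, Finset.sum_sub_distrib, ← Finset.mul_sum]
      have hmaster2 : tauIn G m i * dd a m hG i k
          + ∑ p ∈ G.neighborFinset i, ∑ j ∈ Br hG i p, tauIn G m j * dd a m hG j k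
          = alphaT G a m := by
        rw [← sum_univ_branches hG i (fun j => tauIn G m j * dd a m hG j k)]
        exact master hG a m ha hminv k
      linear_combination (betaV G a m i) * hmaster2
    rw [hCsum]
    by_cases hki : k = i
    · subst hki
      rw [if_pos rfl, rowL_diag hG a m ha hminv hainv k]
      have hsA : ∀ p ∈ G.neighborFinset k,
          Ring.inverse (a k p) * ∑ j ∈ Br hG k p, tauIn G m j * dd a m hG j k
          = Ring.inverse (a k p) * ∑ e ∈ subEdges G k p, fEdge a m e := by
        intro p hp
        have hadj : G.Adj k p := (SimpleGraph.mem_neighborFinset _ _ _).mp hp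
        rw [(ABC hG a m ha hminv (Br hG k p).card k p hadj le_rfl).1]
      rw [Finset.sum_congr rfl hsA]
      linear_combination tauOut G m k * halphainv + hβα
    · rw [if_neg fun hh => hki hh.symm]
      obtain ⟨j0, hj0, hkj0⟩ := exists_branch hG hki
      rw [rowL_off hG a m ha hminv hainv hj0 hkj0]
      have hSp : ∀ p ∈ G.neighborFinset i,
          Ring.inverse (a i p) * ∑ j ∈ Br hG i p, tauIn G m j * dd a m hG j k
          = Ring.inverse (a i p) * (∑ e ∈ subEdges G i p, fEdge a m e)
            + Ring.inverse (a i p) * (1 - sfun m p i) * dd a m hG i k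
            - (if p = j0 then Ring.inverse (a i j0) * dd a m hG i k else 0) := by
        intro p hp
        have hadj : G.Adj i p := (SimpleGraph.mem_neighborFinset _ _ _).mp hp
        obtain ⟨abcA, abcB, abcC⟩ := ABC hG a m ha hminv (Br hG i p).card i p hadj le_rfl
        by_cases hpj0 : p = j0
        · rw [if_pos hpj0]
          have hkp : k ∈ Br hG i p := by rw [hpj0]; exact hkj0
          rw [abcC k hkp, ← hpj0]
          ring
        · rw [if_neg hpj0]
          have hknot : k ∉ Br hG i p := fun hc => hpj0 (second_unique hG hadj hj0 hc hkj0)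
          have hterm : ∀ j ∈ Br hG i p, tauIn G m j * dd a m hG j k
              = tauIn G m j * dd a m hG j i
                + tauIn G m j * mProd m (pth hG j i) * dd a m hG i k := by
            intro j hj
            have hi : i ∈ (pth hG j k).support := sep hG hadj hj hknot hki
            rw [dd_split a m hG hi]
            ring
          rw [Finset.sum_congr rfl hterm, Finset.sum_add_distrib, abcA, ← Finset.sum_mul, abcB]
          ring
      rw [Finset.sum_congr rfl hSp, Finset.sum_sub_distrib, Finset.sum_add_distrib,
        Finset.sum_ite_eq' _ j0 _,
        if_pos ((SimpleGraph.mem_neighborFinset _ _ _).mpr hj0)]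
      have hrho : ∑ p ∈ G.neighborFinset i,
          Ring.inverse (a i p) * (1 - sfun m p i) * dd a m hG i k
          = (∑ p ∈ G.neighborFinset i, Ring.inverse (a i p) * (1 - sfun m p i))
            * dd a m hG i k := by
        rw [Finset.sum_mul]
      rw [hrho]
      linear_combination tauOut G m i * halphainv + hβα
  exact ⟨(Matrix.isUnit_iff_isUnit_det D).mpr (Matrix.isUnit_det_of_left_inverse key), Matrix.inv_eq_left_inv key⟩
end
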